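/- Let {1,…,n} be partitioned into two disjoint nonempty sets A and B with A ∪ B = {1,…,n}, and assume vol(A) > 0 and vol(B) > 0. Define f ∈ ℝⁿ by f_i = 1/vol(A) if i ∈ A and f_i = −1/vol(B) if i ∈ B. Then fᵀ D f = 1/vol(A) + 1/vol(B) > 0 and (fᵀ L f)/(fᵀ D f) = cut(A,B) · (1/vol(A) + 1/vol(B)) = Ncut(A,B). -/

import Mathlib

open Matrix

/-- For the indicator-like vector `f` of a two-set partition, `fᵀ D f =
1/vol(A) + 1/vol(B) > 0` and the generalized Rayleigh quotient `fᵀLf / fᵀDf`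
equals the normalized cut `Ncut(A,B) = cut(A,B)·(1/vol(A) + 1/vol(B))`. -/
theorem ncut_rayleigh_quotient
    (n : ℕ) (W : Matrix (Fin n) (Fin n) ℝ)
    (hsym : ∀ i j, W i j = W j i) (hnn : ∀ i j, 0 ≤ W i j)
    (d : Fin n → ℝ) (hd : ∀ i, d i = ∑ j, W i j)
    (D L : Matrix (Fin n) (Fin n) ℝ)
    (hD : D = Matrix.diagonal d) (hL : L = D - W)
    (A B : Finset (Fin n)) (hdisj : Disjoint A B)
    (hunion : A ∪ B = Finset.univ) (hA : A.Nonempty) (hB : B.Nonempty)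
    (volA volB cutAB : ℝ)
    (hvolA : volA = ∑ i ∈ A, d i) (hvolB : volB = ∑ i ∈ B, d i)
    (hcut : cutAB = ∑ i ∈ A, ∑ j ∈ B, W i j)
    (hvolA0 : 0 < volA) (hvolB0 : 0 < volB)
    (f : Fin n → ℝ)
    (hf : ∀ i, f i = if i ∈ A then 1 / volA else -1 / volB) :
    f ⬝ᵥ (D *ᵥ f) = 1 / volA + 1 / volB ∧
      0 < f ⬝ᵥ (D *ᵥ f) ∧
      (f ⬝ᵥ (L *ᵥ f)) / (f ⬝ᵥ (D *ᵥ f)) = cutAB * (1 / volA + 1 / volB) := by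
  have hsplit : ∀ g : Fin n → ℝ, ∑ i, g i = ∑ i ∈ A, g i + ∑ i ∈ B, g i := by
    intro g; rw [← Finset.sum_union hdisj, hunion]
  have hfA : ∀ i ∈ A, f i = 1 / volA := by
    intro i hi; rw [hf]; simp [hi]
  have hfB : ∀ i ∈ B, f i = -1 / volB := by
    intro i hi; rw [hf, if_neg]
    exact fun h => Finset.disjoint_left.mp hdisj h hi
  have hSAA : ∑ i ∈ A, ∑ j ∈ A, W i j = volA - cutAB := by
    have h : volA = ∑ i ∈ A, ∑ j ∈ A, W i j + cutAB := by
      rw [hvolA, hcut, ← Finset.sum_add_distrib]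
      exact Finset.sum_congr rfl fun i hi => by rw [hd, hsplit]
    linarith
  have hSBA : ∑ i ∈ B, ∑ j ∈ A, W i j = cutAB := by
    rw [hcut]; refine Finset.sum_comm.trans ?_
    exact Finset.sum_congr rfl fun i _ => Finset.sum_congr rfl fun j _ => (hsym i j).symm
  have hSBB : ∑ i ∈ B, ∑ j ∈ B, W i j = volB - cutAB := by
    have h : volB = cutAB + ∑ i ∈ B, ∑ j ∈ B, W i j := by
      rw [← hSBA, ← Finset.sum_add_distrib, hvolB]
      refine Finset.sum_congr rfl fun i hi => ?_
      rw [hd, hsplit]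
    linarith
  have hDf : f ⬝ᵥ (D *ᵥ f) = 1 / volA + 1 / volB := by
    rw [hD]
    simp only [dotProduct, mulVec_diagonal]
    rw [hsplit]
    have h1 : ∑ i ∈ A, f i * (d i * f i) = 1 / volA := by
      have : ∑ i ∈ A, f i * (d i * f i) = ∑ i ∈ A, d i * (1 / volA * (1 / volA)) :=
        Finset.sum_congr rfl fun i hi => by rw [hfA i hi]; ring
      rw [this, ← Finset.sum_mul, ← hvolA]
      field_simp
    have h2 : ∑ i ∈ B, f i * (d i * f i) = 1 / volB := by
      have : ∑ i ∈ B, f i * (d i * f i) = ∑ i ∈ B, d i * (1 / volB * (1 / volB)) :=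
        Finset.sum_congr rfl fun i hi => by rw [hfB i hi]; ring
      rw [this, ← Finset.sum_mul, ← hvolB]
      field_simp
    rw [h1, h2]
  have hWf : f ⬝ᵥ (W *ᵥ f) =
      (volA - cutAB) / (volA * volA) + (volB - cutAB) / (volB * volB)
        - 2 * cutAB / (volA * volB) := by
    have expand : f ⬝ᵥ (W *ᵥ f) = ∑ i, ∑ j, f i * (W i j * f j) := by
      simp only [dotProduct, mulVec]
      exact Finset.sum_congr rfl fun i _ => by rw [Finset.mul_sum]
    rw [expand, hsplit fun i => ∑ j, f i * (W i j * f j)]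
    have hAsplit : ∑ i ∈ A, ∑ j, f i * (W i j * f j)
        = ∑ i ∈ A, (∑ j ∈ A, f i * (W i j * f j) + ∑ j ∈ B, f i * (W i j * f j)) :=
      Finset.sum_congr rfl fun i _ => by rw [hsplit]
    have hBsplit : ∑ i ∈ B, ∑ j, f i * (W i j * f j)
        = ∑ i ∈ B, (∑ j ∈ A, f i * (W i j * f j) + ∑ j ∈ B, f i * (W i j * f j)) :=
      Finset.sum_congr rfl fun i _ => by rw [hsplit]
    rw [hAsplit, hBsplit, Finset.sum_add_distrib, Finset.sum_add_distrib]
    have e1 : ∑ i ∈ A, ∑ j ∈ A, f i * (W i j * f j)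
        = (volA - cutAB) * (1 / volA * (1 / volA)) := by
      rw [← hSAA, Finset.sum_mul]
      exact Finset.sum_congr rfl fun i hi => by
        rw [Finset.sum_mul]
        exact Finset.sum_congr rfl fun j hj => by rw [hfA i hi, hfA j hj]; ring
    have e2 : ∑ i ∈ A, ∑ j ∈ B, f i * (W i j * f j)
        = cutAB * (1 / volA * (-1 / volB)) := by
      rw [hcut, Finset.sum_mul]
      exact Finset.sum_congr rfl fun i hi => by
        rw [Finset.sum_mul]
        exact Finset.sum_congr rfl fun j hj => by rw [hfA i hi, hfB j hj]; ring
    have e3 : ∑ i ∈ B, ∑ j ∈ A, f i * (W i j * f j)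
        = cutAB * (-1 / volB * (1 / volA)) := by
      rw [← hSBA, Finset.sum_mul]
      exact Finset.sum_congr rfl fun i hi => by
        rw [Finset.sum_mul]
        exact Finset.sum_congr rfl fun j hj => by rw [hfB i hi, hfA j hj]; ring
    have e4 : ∑ i ∈ B, ∑ j ∈ B, f i * (W i j * f j)
        = (volB - cutAB) * (-1 / volB * (-1 / volB)) := by
      rw [← hSBB, Finset.sum_mul]
      exact Finset.sum_congr rfl fun i hi => by
        rw [Finset.sum_mul]
        exact Finset.sum_congr rfl fun j hj => by rw [hfB i hi, hfB j hj]; ring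
    rw [e1, e2, e3, e4]
    field_simp
    ring
  have hpos : 0 < f ⬝ᵥ (D *ᵥ f) := by
    rw [hDf]; positivity
  refine ⟨hDf, hpos, ?_⟩
  have hLf : f ⬝ᵥ (L *ᵥ f) = cutAB * (1 / volA + 1 / volB) ^ 2 := by
    rw [hL, sub_mulVec, dotProduct_sub, hDf, hWf]
    field_simp
    ring
  rw [hLf, hDf]
  have hne : 1 / volA + 1 / volB ≠ 0 := by positivity
  field_simp
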